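/- arXiv:math/0511119 — 6 statements merged into one kernel-verified Lean document; each statement's English description precedes it below -/
import Mathlib

section
/- Let d ≥ 3 be an integer and s a real number with 1 ≤ s ≤ d+1. Define f(y) = (d+1)(s+1) − (d+2)(d+1+2s)·y + (d+3)(d+1+s)·y² + y^{d+2}·(−(d+3)(d+1−s) + (d+2)(d+1−2s)·y + (d+1)(s−1)·y²). Then f(y) > 0 for all y > 1. -/
/-!
The polynomial `f` vanishes to third order at `y = 1`, and its third derivative is
`(d+1)(d+2)(d+3) y^(d-1) P(y)` with `P` a quadratic which, expanded in powers of `y - 1`, has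
nonnegative coefficients and a positive linear coefficient once `d ≥ 2` and `s ≥ 1`. So `f''' > 0`
on `(1, ∞)`, and integrating three times from `1` gives `f > 0` there.
-/

open Polynomial

namespace Polynomial

theorem eval_pos_of_iterate_derivative_pos {p : ℝ[X]} {a : ℝ} {k : ℕ}
    (hzero : ∀ i < k, (derivative^[i] p).eval a = 0)
    (hpos : ∀ x, a < x → 0 < (derivative^[k] p).eval x) {x : ℝ} (hx : a < x) :
    0 < p.eval x := by
  induction k generalizing p x with
  | zero => exact hpos x hx
  | succ k ih =>
    have hderiv : ∀ x, a < x → 0 < p.derivative.eval x :=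
      fun x hx => ih (fun i hi => hzero (i + 1) (by omega)) hpos hx
    have hmono : StrictMonoOn (fun x => p.eval x) (Set.Ici a) :=
      strictMonoOn_of_deriv_pos (convex_Ici a) p.continuousOn fun x hx => by
        rw [interior_Ici] at hx
        simpa only [Polynomial.deriv] using hderiv x hx
    have hp0 : p.eval a = 0 := hzero 0 k.succ_pos
    simpa [hp0] using hmono Set.self_mem_Ici hx.le hx

end Polynomial

noncomputable def wbfPoly (d : ℕ) (s : ℝ) : ℝ[X] :=
  C ((d+1)*(s+1)) - C ((d+2)*(d+1+2*s)) * X + C ((d+3)*(d+1+s)) * X^2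
    + X^(d+2) * (C (-(d+3)*(d+1-s)) + C ((d+2)*(d+1-2*s)) * X + C ((d+1)*(s-1)) * X^2)

theorem eval_wbfPoly (d : ℕ) (s y : ℝ) : (wbfPoly d s).eval y =
    (d+1)*(s+1) - (d+2)*(d+1+2*s)*y + (d+3)*(d+1+s)*y^2
      + y^(d+2) * (-(d+3)*(d+1-s) + (d+2)*(d+1-2*s)*y + (d+1)*(s-1)*y^2) := by
  simp [wbfPoly]

theorem eval_one_iterate_derivative_wbfPoly (d : ℕ) (s : ℝ) {i : ℕ} (hi : i < 3) :
    (derivative^[i] (wbfPoly d s)).eval 1 = 0 := by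
  interval_cases i <;>
    simp only [wbfPoly, Function.iterate_succ_apply', Function.iterate_zero_apply, derivative_add,
      derivative_sub, derivative_mul, derivative_C, derivative_X, derivative_X_pow_succ, derivative_zero,
      derivative_one, eval_add, eval_sub, eval_mul, eval_C, eval_X, eval_pow, eval_zero, eval_one, pow_zero,
      Nat.cast_add, Nat.cast_one] <;>
    ring

theorem eval_iterate_derivative_three_wbfPoly {d : ℕ} (hd : 1 ≤ d) (s x : ℝ) :
    (derivative^[3] (wbfPoly d s)).eval x = (d+1)*(d+2)*(d+3) * x^(d-1) *
      (-d*(1+d-s) + (d+2)*(d+1-2*s)*x + (d+4)*(s-1)*x^2) := by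
  obtain ⟨n, rfl⟩ := Nat.exists_eq_add_of_le' hd
  simp only [wbfPoly, Function.iterate_succ_apply', Function.iterate_zero_apply, derivative_add,
    derivative_sub, derivative_mul, derivative_C, derivative_X, derivative_X_pow_succ, derivative_zero,
    derivative_one, eval_add, eval_sub, eval_mul, eval_C, eval_X, eval_pow, eval_zero, eval_one, pow_zero,
    Nat.cast_add, Nat.cast_one, Nat.cast_ofNat, add_tsub_cancel_right]
  ring

theorem wbf_quadratic_pos {d s x : ℝ} (hd : 2 ≤ d) (hs : 1 ≤ s) (hx : 1 < x) :
    0 < -d*(1+d-s) + (d+2)*(d+1-2*s)*x + (d+4)*(s-1)*x^2 := by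
  have h : -d*(1+d-s) + (d+2)*(d+1-2*s)*x + (d+4)*(s-1)*x^2
      = (d-2) + ((d+3)*(d-2)+4*s)*(x-1) + (d+4)*(s-1)*(x-1)^2 := by ring
  rw [h]
  have hlin : 0 < ((d+3)*(d-2)+4*s)*(x-1) := mul_pos (by nlinarith) (by linarith)
  have hsq : 0 ≤ (d+4)*(s-1)*(x-1)^2 :=
    mul_nonneg (mul_nonneg (by linarith) (by linarith)) (sq_nonneg _)
  linarith

theorem stmt4_general (d : ℕ) (hd : 3 ≤ d) (s : ℝ) (hs1 : 1 ≤ s)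
    (y : ℝ) (hy : 1 < y) :
    0 < (d+1)*(s+1) - (d+2)*(d+1+2*s)*y + (d+3)*(d+1+s)*y^2
      + y^(d+2) * (-(d+3)*(d+1-s) + (d+2)*(d+1-2*s)*y + (d+1)*(s-1)*y^2) := by
  rw [← eval_wbfPoly]
  refine eval_pos_of_iterate_derivative_pos (k := 3)
    (fun i hi => eval_one_iterate_derivative_wbfPoly d s hi) (fun x hx => ?_) hy
  rw [eval_iterate_derivative_three_wbfPoly (by omega)]
  have hd2 : (2 : ℝ) ≤ d := by exact_mod_cast (by omega : 2 ≤ d)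
  have hP := wbf_quadratic_pos hd2 hs1 hx
  have hx0 : 0 < x := by linarith
  positivity

theorem stmt4 (d : ℕ) (hd : 3 ≤ d) (s : ℝ) (hs1 : 1 ≤ s) (hs2 : s ≤ d + 1)
    (y : ℝ) (hy : 1 < y) :
    0 < (d+1)*(s+1) - (d+2)*(d+1+2*s)*y + (d+3)*(d+1+s)*y^2
      + y^(d+2) * (-(d+3)*(d+1-s) + (d+2)*(d+1-2*s)*y + (d+1)*(s-1)*y^2) :=
  stmt4_general d hd s hs1 y hy
end

section
/- Let p: [−1,1] → ℝ be continuous with p > 0 on (−1,1), let d₀, d_∞ be nonnegative integers, and let c be a real number. Define G(k) = ∫_{−1}^{1} e^{kt}·((d₀+1)(1−t) − (d_∞+1)(1+t))·p(t) dt. Then there exists t₀ ∈ (−1,1) such that (d₀+1)(1−t) − (d_∞+1)(1+t) = −(d₀+d_∞+2)(t − t₀)·(constant sign), and G has exactly one real zero; i.e., there is a unique real number c with G(c) = 0. -/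
/-!
Write `D = d₀ + d_∞ + 2` and `t₀ = (d₀ - d_∞)/D`, so that the linear factor is `D (t₀ - t)` and
`G(k) = D e^{k t₀} H(k)` with `H(k) = ∫ e^{k(t-t₀)} (t₀ - t) p(t) dt`. For `k₁ < k₂` the
difference `e^{k₁ s} - e^{k₂ s}` has the sign of `-s`, so `H` is strictly decreasing. For large
`k` the part of the integral beyond `t₀` (where the integrand is negative) grows exponentially
while the part before `t₀` stays bounded, so `H` becomes negative; reflecting `t ↦ -t` makes it
positive for very negative `k`. Continuity and the intermediate value theorem finish.
-/

open Real Set Filter intervalIntegral MeasureTheory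

theorem intervalIntegral_pos_of_pos_on_Ioo_of_ne {f : ℝ → ℝ} {a b c : ℝ}
    (hfi : IntervalIntegrable f volume a b) (hab : a < b)
    (hpos : ∀ x ∈ Ioo a b, x ≠ c → 0 < f x) : 0 < ∫ x in a..b, f x := by
  by_cases hc : c ∈ Ioo a b
  · have hsub : ∀ {x y}, a ≤ x → x ≤ y → y ≤ b → uIcc x y ⊆ uIcc a b := fun hx hxy hy => by
      rw [uIcc_of_le hxy, uIcc_of_le hab.le]; exact Icc_subset_Icc hx hy
    rw [← integral_add_adjacent_intervals (hfi.mono_set (hsub le_rfl hc.1.le hc.2.le))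
      (hfi.mono_set (hsub hc.1.le hc.2.le le_rfl))]
    exact add_pos
      (intervalIntegral_pos_of_pos_on (hfi.mono_set (hsub le_rfl hc.1.le hc.2.le))
        (fun x hx => hpos x ⟨hx.1, hx.2.trans hc.2⟩ hx.2.ne) hc.1)
      (intervalIntegral_pos_of_pos_on (hfi.mono_set (hsub hc.1.le hc.2.le le_rfl))
        (fun x hx => hpos x ⟨hc.1.trans hx.1, hx.2⟩ hx.1.ne') hc.2)
  · exact intervalIntegral_pos_of_pos_on hfi
      (fun x hx => hpos x hx (by rintro rfl; exact hc hx)) hab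

theorem exp_mul_sub_exp_mul_mul_pos {k₁ k₂ s : ℝ} (hk : k₁ < k₂) (hs : s ≠ 0) :
    0 < (exp (k₁ * s) - exp (k₂ * s)) * -s := by
  rcases hs.lt_or_gt with hs | hs
  · exact mul_pos (sub_pos.2 (exp_lt_exp.2 (mul_lt_mul_of_neg_right hk hs))) (neg_pos.2 hs)
  · exact mul_pos_of_neg_of_neg (sub_neg.2 (exp_lt_exp.2 (mul_lt_mul_of_pos_right hk hs)))
      (neg_neg_of_pos hs)

theorem exp_mul_mul_neg_le_max {k : ℝ} (hk : 0 ≤ k) (s : ℝ) :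
    exp (k * s) * -s ≤ max (-s) 0 := by
  rcases le_or_gt s 0 with hs | hs
  · calc exp (k * s) * -s ≤ 1 * -s :=
          mul_le_mul_of_nonneg_right (exp_le_one_iff.2 (mul_nonpos_of_nonneg_of_nonpos hk hs))
            (neg_nonneg.2 hs)
      _ ≤ max (-s) 0 := by rw [one_mul]; exact le_max_left _ _
  · exact (mul_neg_of_pos_of_neg (exp_pos _) (neg_neg_of_pos hs)).le.trans (le_max_right _ _)

noncomputable def tiltedMoment (a b t₀ : ℝ) (w : ℝ → ℝ) (k : ℝ) : ℝ :=
  ∫ t in a..b, exp (k * (t - t₀)) * ((t₀ - t) * w t)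

section TiltedMoment

variable {a b t₀ : ℝ} {w : ℝ → ℝ}

theorem tiltedMoment_apply_neg (k : ℝ) :
    tiltedMoment a b t₀ w (-k) = -tiltedMoment (-b) (-a) (-t₀) (fun t => w (-t)) k := by
  rw [tiltedMoment, tiltedMoment, ← integral_comp_neg, ← intervalIntegral.integral_neg]
  refine integral_congr fun t _ => ?_
  simp only [neg_neg]
  ring_nf

theorem strictAnti_tiltedMoment (hab : a < b) (hw : ContinuousOn w (Icc a b))
    (hpos : ∀ t ∈ Ioo a b, 0 < w t) : StrictAnti (tiltedMoment a b t₀ w) := by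
  intro k₁ k₂ hk
  have hint : ∀ k,
      IntervalIntegrable (fun t => exp (k * (t - t₀)) * ((t₀ - t) * w t)) volume a b :=
    fun k => ContinuousOn.intervalIntegrable_of_Icc hab.le (by fun_prop)
  rw [← sub_pos, tiltedMoment, tiltedMoment, ← integral_sub (hint k₁) (hint k₂)]
  refine intervalIntegral_pos_of_pos_on_Ioo_of_ne (c := t₀) ((hint k₁).sub (hint k₂)) hab
    fun t ht htt₀ => ?_
  have := mul_pos (exp_mul_sub_exp_mul_mul_pos hk (sub_ne_zero.2 htt₀)) (hpos t ht)
  rw [neg_sub] at this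
  linarith

theorem continuous_tiltedMoment (hab : a ≤ b) (hw : ContinuousOn w (Icc a b)) :
    Continuous (tiltedMoment a b t₀ w) := by
  set v := IccExtend hab ((Icc a b).domRestrict w)
  have hv : Continuous v := continuous_IccExtend_iff.2 hw.domRestrict
  have hwv : tiltedMoment a b t₀ w = tiltedMoment a b t₀ v := by
    funext k
    refine integral_congr fun t ht => ?_
    rw [uIcc_of_le hab] at ht
    simp only [v, IccExtend_of_mem hab _ ht, Set.domRestrict_apply]
  rw [hwv]
  exact continuous_parametric_intervalIntegral_of_continuous' (by fun_prop) a b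

theorem exists_tiltedMoment_neg (ht₀ : t₀ ∈ Ioo a b) (hw : ContinuousOn w (Icc a b))
    (hpos : ∀ t ∈ Ioo a b, 0 < w t) : ∃ k, tiltedMoment a b t₀ w k < 0 := by
  obtain ⟨t₁, ht₀t₁, ht₁b⟩ := exists_between ht₀.2
  have hw₁ : ContinuousOn w (Icc a t₁) := hw.mono (Icc_subset_Icc le_rfl ht₁b.le)
  have hw₂ : ContinuousOn w (Icc t₁ b) := hw.mono (Icc_subset_Icc (ht₀.1.trans ht₀t₁).le le_rfl)
  have hat₁ : a ≤ t₁ := (ht₀.1.trans ht₀t₁).le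
  set C := ∫ t in a..t₁, max (t₀ - t) 0 * w t
  set A := ∫ t in t₁..b, (t₀ - t) * w t
  have hA : A < 0 := by
    rw [← neg_pos, ← intervalIntegral.integral_neg]
    refine intervalIntegral_pos_of_pos_on (ContinuousOn.intervalIntegrable_of_Icc ht₁b.le
      (by fun_prop)) (fun t ht => ?_) ht₁b
    nlinarith [hpos t ⟨ht₀.1.trans (ht₀t₁.trans ht.1), ht.2⟩, ht.1]
  -- On `[a, t₁]` the weight `e^{k(t-t₀)}` is at most `1` where the integrand is positive, and on
  -- `[t₁, b]` it is at least `e^{k(t₁-t₀)}` where the integrand is negative.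
  have hbound : ∀ k, 0 ≤ k → tiltedMoment a b t₀ w k ≤ C + exp (k * (t₁ - t₀)) * A := by
    intro k hk
    rw [tiltedMoment, ← integral_add_adjacent_intervals
      (ContinuousOn.intervalIntegrable_of_Icc hat₁ (by fun_prop))
      (ContinuousOn.intervalIntegrable_of_Icc ht₁b.le (by fun_prop)),
      ← intervalIntegral.integral_const_mul]
    refine add_le_add (integral_mono_on_of_le_Ioo hat₁
      (ContinuousOn.intervalIntegrable_of_Icc hat₁ (by fun_prop))
      (ContinuousOn.intervalIntegrable_of_Icc hat₁ (by fun_prop)) fun t ht => ?_)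
      (integral_mono_on_of_le_Ioo ht₁b.le
      (ContinuousOn.intervalIntegrable_of_Icc ht₁b.le (by fun_prop))
      (ContinuousOn.intervalIntegrable_of_Icc ht₁b.le (by fun_prop)) fun t ht => ?_)
    · have hwt := hpos t ⟨ht.1, ht.2.trans ht₁b⟩
      have := mul_le_mul_of_nonneg_right (exp_mul_mul_neg_le_max hk (t - t₀)) hwt.le
      rw [neg_sub] at this
      linarith
    · have hwt := hpos t ⟨hat₁.trans_lt ht.1, ht.2⟩
      have hexp : exp (k * (t₁ - t₀)) ≤ exp (k * (t - t₀)) :=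
        exp_le_exp.2 (mul_le_mul_of_nonneg_left (by linarith [ht.1]) hk)
      exact mul_le_mul_of_nonpos_right hexp
        (mul_nonpos_of_nonpos_of_nonneg (by linarith [ht.1]) hwt.le)
  have hlim : Tendsto (fun k => C + exp (k * (t₁ - t₀)) * A) atTop atBot :=
    tendsto_atBot_add_const_left _ C <| Tendsto.atTop_mul_const_of_neg hA <|
      tendsto_exp_atTop.comp (tendsto_id.atTop_mul_const (sub_pos.2 ht₀t₁))
  obtain ⟨k, hk₀, hk⟩ :=
    ((eventually_ge_atTop 0).and (hlim.eventually (eventually_lt_atBot 0))).exists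
  exact ⟨k, (hbound k hk₀).trans_lt hk⟩

theorem exists_tiltedMoment_pos (ht₀ : t₀ ∈ Ioo a b) (hw : ContinuousOn w (Icc a b))
    (hpos : ∀ t ∈ Ioo a b, 0 < w t) : ∃ k, 0 < tiltedMoment a b t₀ w k := by
  obtain ⟨k, hk⟩ :=
    exists_tiltedMoment_neg (a := -b) (b := -a) (t₀ := -t₀) (w := fun t => w (-t))
      ⟨neg_lt_neg ht₀.2, neg_lt_neg ht₀.1⟩
      (hw.comp continuousOn_neg fun t ht => ⟨le_neg.1 ht.2, neg_le.1 ht.1⟩)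
      fun t ht => hpos (-t) ⟨lt_neg.1 ht.2, neg_lt.1 ht.1⟩
  exact ⟨-k, by rw [tiltedMoment_apply_neg]; linarith⟩

end TiltedMoment

theorem existsUnique_eq_zero_of_strictAnti {f : ℝ → ℝ} (hf : StrictAnti f) (hc : Continuous f)
    (hneg : ∃ x, f x < 0) (hpos : ∃ x, 0 < f x) : ∃! x, f x = 0 := by
  obtain ⟨x, hx⟩ := hneg
  obtain ⟨y, hy⟩ := hpos
  have hyx : y ≤ x := le_of_not_gt fun hxy => (hf hxy).asymm (hx.trans hy)
  obtain ⟨c, -, hc0⟩ := intermediate_value_Icc' hyx hc.continuousOn ⟨hx.le, hy.le⟩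
  exact ⟨c, hc0, fun z hz => hf.injective (hz.trans hc0.symm)⟩

theorem existsUnique_tiltedMoment_eq_zero {a b t₀ : ℝ} {w : ℝ → ℝ} (ht₀ : t₀ ∈ Ioo a b)
    (hw : ContinuousOn w (Icc a b)) (hpos : ∀ t ∈ Ioo a b, 0 < w t) :
    ∃! k, tiltedMoment a b t₀ w k = 0 :=
  have hab := ht₀.1.trans ht₀.2
  existsUnique_eq_zero_of_strictAnti (strictAnti_tiltedMoment hab hw hpos)
    (continuous_tiltedMoment hab.le hw) (exists_tiltedMoment_neg ht₀ hw hpos)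
    (exists_tiltedMoment_pos ht₀ hw hpos)

open intervalIntegral Real in
theorem stmt5 (p : ℝ → ℝ) (hp : ContinuousOn p (Set.Icc (-1) 1))
    (hpos : ∀ t ∈ Set.Ioo (-1:ℝ) 1, 0 < p t)
    (d₀ dinf : ℕ) (G : ℝ → ℝ)
    (hG : ∀ k, G k = ∫ t in (-1:ℝ)..1,
      Real.exp (k*t) * ((d₀+1)*(1-t) - (dinf+1)*(1+t)) * p t) :
    (∃ t₀ ∈ Set.Ioo (-1:ℝ) 1, ∀ t : ℝ,
      (d₀+1)*(1-t) - (dinf+1)*(1+t) = -((d₀:ℝ)+dinf+2) * (t - t₀)) ∧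
    ∃! c : ℝ, G c = 0 := by
  set D : ℝ := d₀ + dinf + 2
  have hD : 0 < D := by positivity
  set t₀ := ((d₀ : ℝ) - dinf) / D
  have ht₀ : t₀ ∈ Ioo (-1) 1 := by
    constructor
    · rw [lt_div_iff₀ hD]; linarith [(d₀.cast_nonneg : (0 : ℝ) ≤ d₀)]
    · rw [div_lt_one hD]; linarith [(dinf.cast_nonneg : (0 : ℝ) ≤ dinf)]
  have hlin : ∀ t : ℝ, (d₀+1)*(1-t) - (dinf+1)*(1+t) = -D * (t - t₀) := by
    intro t
    have : D * t₀ = d₀ - dinf := mul_div_cancel₀ _ hD.ne'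
    linear_combination -this
  have hGH : ∀ k, G k = D * exp (k * t₀) * tiltedMoment (-1) 1 t₀ p k := by
    intro k
    rw [hG, tiltedMoment, ← intervalIntegral.integral_const_mul]
    refine integral_congr fun t _ => ?_
    rw [hlin, show k * t = k * t₀ + k * (t - t₀) by ring, exp_add]
    ring
  refine ⟨⟨t₀, ht₀, hlin⟩, (existsUnique_congr fun k => ?_).2
    (existsUnique_tiltedMoment_eq_zero ht₀ hp hpos)⟩
  simp [hGH, hD.ne', exp_ne_zero]
end

section
/- Let p: [−1,1] → ℝ be continuous with p > 0 on (−1,1), let d₀, d_∞ be nonnegative integers, c a real number with ∫_{−1}^{1} e^{ct}((d₀+1)(1−t) − (d_∞+1)(1+t))p(t)dt = 0, and define F(z) = e^{−cz}·∫_{−1}^{z} e^{ct}·((d₀+1)(1−t) − (d_∞+1)(1+t))·p(t) dt. Then F(−1) = F(1) = 0 and F(z) > 0 for all z ∈ (−1,1). -/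
/-!
The integrand `e^{ct} ((d₀+1)(1-t) - (d_∞+1)(1+t)) p(t)` is positive to the left of the root
`t₀ = (d₀ - d_∞)/(d₀ + d_∞ + 2)` of the linear factor and negative to its right. Hence
`z ↦ ∫_{-1}^z` increases strictly up to `t₀` and then decreases strictly to its value `0` at `1`,
so it is positive on `(-1, 1)`.
-/

open Set MeasureTheory intervalIntegral

theorem integral_pos_of_sign_change {g : ℝ → ℝ} {a b s z : ℝ}
    (hg : IntervalIntegrable g volume a b) (hzero : ∫ t in a..b, g t = 0)
    (hleft : ∀ t ∈ Ioo a b, t < s → 0 < g t) (hright : ∀ t ∈ Ioo a b, s < t → g t < 0)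
    (hz : z ∈ Ioo a b) : 0 < ∫ t in a..z, g t := by
  have hab : a ≤ b := hz.1.le.trans hz.2.le
  rcases le_or_gt z s with hzs | hsz
  · exact intervalIntegral_pos_of_pos_on
      (hg.mono_set (uIcc_subset_uIcc_left (by simp [uIcc_of_le hab, hz.1.le, hz.2.le])))
      (fun t ht => hleft t ⟨ht.1, ht.2.trans hz.2⟩ (ht.2.trans_le hzs)) hz.1
  · have hzb : IntervalIntegrable g volume z b :=
      hg.mono_set (uIcc_subset_uIcc_right (by simp [uIcc_of_le hab, hz.1.le, hz.2.le]))
    have haz : IntervalIntegrable g volume a z := hg.trans hzb.symm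
    have hsplit : ∫ t in a..z, g t = ∫ t in z..b, -g t := by
      rw [intervalIntegral.integral_neg, ← integral_interval_sub_left hg haz, hzero]
      ring
    rw [hsplit]
    exact intervalIntegral_pos_of_pos_on hzb.neg
      (fun t ht => neg_pos.mpr (hright t ⟨hz.1.trans ht.1, ht.2⟩ (hsz.trans ht.1))) hz.2

theorem linear_factor_eq_mul_sub_root {α β : ℝ} (h : α + β ≠ 0) (t : ℝ) :
    α * (1 - t) - β * (1 + t) = (α + β) * ((α - β) / (α + β) - t) := by
  field_simp
  ring

open intervalIntegral Real in
theorem stmt6 (p : ℝ → ℝ) (hp : ContinuousOn p (Set.Icc (-1) 1))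
    (hpos : ∀ t ∈ Set.Ioo (-1:ℝ) 1, 0 < p t)
    (d₀ dinf : ℕ) (c : ℝ)
    (hc : (∫ t in (-1:ℝ)..1,
      Real.exp (c*t) * ((d₀+1)*(1-t) - (dinf+1)*(1+t)) * p t) = 0)
    (F : ℝ → ℝ)
    (hF : ∀ z, F z = Real.exp (-c*z) * ∫ t in (-1:ℝ)..z,
      Real.exp (c*t) * ((d₀+1)*(1-t) - (dinf+1)*(1+t)) * p t) :
    F (-1) = 0 ∧ F 1 = 0 ∧ ∀ z ∈ Set.Ioo (-1:ℝ) 1, 0 < F z := by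
  refine ⟨by simp [hF], by simp [hF, hc], fun z hz => ?_⟩
  have hsum : (0 : ℝ) < (d₀ + 1) + (dinf + 1) := by positivity
  have hint : IntervalIntegrable
      (fun t => exp (c*t) * ((d₀+1)*(1-t) - (dinf+1)*(1+t)) * p t) volume (-1) 1 := by
    refine (ContinuousOn.mul ?_ hp).intervalIntegrable_of_Icc (by norm_num)
    fun_prop
  rw [hF z]
  refine mul_pos (exp_pos _) (integral_pos_of_sign_change hint hc
    (s := ((d₀+1) - (dinf+1)) / ((d₀+1) + (dinf+1))) (fun t ht hts => ?_) (fun t ht hst => ?_) hz)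
  · rw [linear_factor_eq_mul_sub_root hsum.ne']
    exact mul_pos (mul_pos (exp_pos _) (mul_pos hsum (sub_pos.mpr hts))) (hpos t ht)
  · rw [linear_factor_eq_mul_sub_root hsum.ne']
    exact mul_neg_of_neg_of_pos (mul_neg_of_pos_of_neg (exp_pos _)
      (mul_neg_of_pos_of_neg hsum (sub_neg.mpr hst))) (hpos t ht)
end

section
/- If s₂ ≥ −2 and 0 < x < 2 − √3, then M(x, 1−x, 2, s₂) < 0, where M(x,y,2,s₂) = −96x⁶ − 112x⁵y + 72x⁴y² − 304x³y³ − 620x²y⁴ − 240xy⁵ − 50y⁶ − 25s₂·y(2x+y)(y² − 2x(x+y))². -/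
/-!
`M` is linear in `s₂` with coefficient `-25 y (2x + y)(y² - 2x(x + y))² ≤ 0` for `x, y ≥ 0`,
so it suffices to treat `s₂ = -2`. On the line `y = 1 - x` this value factors as
`4x(1 - 2x)(11x⁴ - 96x³ + 194x² - 85)`, and the quartic is negative on `[0, 1/2]`;
finally `2 - √3 < 1/2`.
-/

/-- The paper's `M(X, Y, 2, s₂)`. -/
def M (s₂ X Y : ℝ) : ℝ :=
  -96*X^6 - 112*X^5*Y + 72*X^4*Y^2 - 304*X^3*Y^3 - 620*X^2*Y^4 - 240*X*Y^5 - 50*Y^6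
    - 25*s₂*Y*(2*X+Y)*(Y^2 - 2*X*(X+Y))^2

lemma M_antitone {X Y : ℝ} (hY : 0 ≤ Y) (hXY : 0 ≤ 2*X + Y) : Antitone (fun s₂ => M s₂ X Y) := by
  intro t s hts
  have hcoeff : 0 ≤ Y * (2*X + Y) * (Y^2 - 2*X*(X+Y))^2 := by positivity
  have hdiff : M s X Y = M t X Y - 25 * (s - t) * (Y * (2*X + Y) * (Y^2 - 2*X*(X+Y))^2) := by
    unfold M; ring
  show M s X Y ≤ M t X Y
  nlinarith [mul_nonneg (sub_nonneg.mpr hts) hcoeff]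

lemma M_neg_two_one_sub (x : ℝ) :
    M (-2) x (1 - x) = 4*x*(1 - 2*x)*(11*x^4 - 96*x^3 + 194*x^2 - 85) := by
  unfold M; ring

lemma quartic_neg {x : ℝ} (hx0 : 0 ≤ x) (hx1 : x ≤ 1/2) : 11*x^4 - 96*x^3 + 194*x^2 - 85 < 0 := by
  have hsq : x^2 ≤ 1/4 := by nlinarith
  nlinarith [pow_nonneg hx0 3, mul_le_mul hsq hsq (sq_nonneg x) (by norm_num)]

lemma M_one_sub_neg {s₂ x : ℝ} (hs : -2 ≤ s₂) (hx0 : 0 < x) (hx1 : x < 1/2) :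
    M s₂ x (1 - x) < 0 := by
  have hbase : M (-2) x (1 - x) < 0 := by
    rw [M_neg_two_one_sub]
    exact mul_neg_of_pos_of_neg (by nlinarith) (quartic_neg hx0.le hx1.le)
  exact (M_antitone (by linarith) (by linarith) hs).trans_lt hbase

lemma two_sub_sqrt_three_lt_half : 2 - Real.sqrt 3 < 1/2 := by
  have h : (3/2 : ℝ) < Real.sqrt 3 := by
    rw [Real.lt_sqrt (by norm_num)]; norm_num
  linarith

theorem stmt14 (s₂ x : ℝ) (hs : -2 ≤ s₂) (hx0 : 0 < x) (hx1 : x < 2 - Real.sqrt 3) :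
    (fun (X Y : ℝ) => -96*X^6 - 112*X^5*Y + 72*X^4*Y^2 - 304*X^3*Y^3
      - 620*X^2*Y^4 - 240*X*Y^5 - 50*Y^6
      - 25*s₂*Y*(2*X+Y)*(Y^2 - 2*X*(X+Y))^2) x (1-x) < 0 :=
  M_one_sub_neg hs hx0 (hx1.trans two_sub_sqrt_three_lt_half)
end

section
/- If s₂ < −1, then the function g(x) = 64x³ + 160x²(1−x) + 10(9 + 5s₂)x(1−x)² + 25(1 + s₂)(1−x)³ has exactly one zero in (0,1). -/
/-!
With `y = 1 - x`, the derivative of `g` is `32x² + 140xy + 15y² - 25 s₂ y(4x + y)`, which is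
positive on `(0, 1)` as soon as `s₂ ≤ 0`. So `g` is strictly increasing on `[0, 1]`, and since
`g 0 = 25(1 + s₂) < 0 < 64 = g 1` it has exactly one zero there.
-/

open Set

theorem existsUnique_mem_Ioo_eq_of_strictMonoOn {α δ : Type*} [ConditionallyCompleteLinearOrder α]
    [TopologicalSpace α] [OrderTopology α] [DenselyOrdered α] [LinearOrder δ] [TopologicalSpace δ]
    [OrderClosedTopology δ] {f : α → δ} {a b : α} {c : δ} (hab : a ≤ b)
    (hf : ContinuousOn f (Icc a b)) (hmono : StrictMonoOn f (Icc a b)) (ha : f a < c)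
    (hb : c < f b) : ∃! x, x ∈ Ioo a b ∧ f x = c := by
  obtain ⟨x, hx, hfx⟩ := intermediate_value_Ioo hab hf ⟨ha, hb⟩
  refine ⟨x, ⟨hx, hfx⟩, fun y ⟨hy, hfy⟩ => ?_⟩
  exact hmono.injOn (Ioo_subset_Icc_self hy) (Ioo_subset_Icc_self hx) (hfy.trans hfx.symm)

def cubicG (s x : ℝ) : ℝ :=
  64*x^3 + 160*x^2*(1-x) + 10*(9 + 5*s)*x*(1-x)^2 + 25*(1 + s)*(1-x)^3

theorem hasDerivAt_cubicG (s x : ℝ) :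
    HasDerivAt (cubicG s)
      (32*x^2 + 140*x*(1-x) + 15*(1-x)^2 - 25*s*(1-x)*(4*x + (1-x))) x := by
  have hy : HasDerivAt (fun x : ℝ => 1 - x) (-1) x := (hasDerivAt_id x).const_sub 1
  have h := (((hasDerivAt_pow 3 x).const_mul 64).add
    (((hasDerivAt_pow 2 x).mul hy).const_mul 160)).add
    ((((hasDerivAt_id x).mul (hy.pow 2)).const_mul (10*(9 + 5*s))).add
      ((hy.pow 3).const_mul (25*(1 + s))))
  refine (h.congr_deriv ?_).congr_of_eventuallyEq (.of_forall fun y => ?_)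
  · simp only [Pi.pow_apply, id]; push_cast; ring
  · simp only [cubicG, Pi.add_apply, Pi.mul_apply, Pi.pow_apply, id]; ring

theorem strictMonoOn_cubicG {s : ℝ} (hs : s ≤ 0) : StrictMonoOn (cubicG s) (Icc 0 1) := by
  refine strictMonoOn_of_hasDerivWithinAt_pos (convex_Icc 0 1)
    (fun x _ => (hasDerivAt_cubicG s x).continuousAt.continuousWithinAt)
    (fun x _ => (hasDerivAt_cubicG s x).hasDerivWithinAt) fun x hx => ?_
  rw [interior_Icc] at hx
  have hx0 : 0 < x := hx.1
  have hy0 : 0 < 1 - x := sub_pos.mpr hx.2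
  have hns : 0 ≤ -s := neg_nonneg.mpr hs
  have : 0 ≤ -s * (1 - x) * (4*x + (1 - x)) := by positivity
  nlinarith [mul_pos hx0 hx0, mul_pos hx0 hy0, mul_pos hy0 hy0]

theorem stmt16 (s₂ : ℝ) (hs : s₂ < -1) :
    ∃! x : ℝ, x ∈ Set.Ioo (0:ℝ) 1 ∧
      64*x^3 + 160*x^2*(1-x) + 10*(9 + 5*s₂)*x*(1-x)^2 + 25*(1 + s₂)*(1-x)^3 = 0 := by
  have hcont : ContinuousOn (cubicG s₂) (Icc 0 1) :=
    fun x _ => (hasDerivAt_cubicG s₂ x).continuousAt.continuousWithinAt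
  have hg0 : cubicG s₂ 0 < 0 := by norm_num [cubicG]; linarith
  have hg1 : 0 < cubicG s₂ 1 := by norm_num [cubicG]
  exact existsUnique_mem_Ioo_eq_of_strictMonoOn zero_le_one hcont
    (strictMonoOn_cubicG (by linarith)) hg0 hg1
end

section
/- Suppose d₁, d₂ ≥ 1 are integers, not both equal to 1, and s₁ < 1, s₂ < 1 are real numbers. Define h_a(x₁,x₂) = ∫_{−1}^{1} (1+x₁t)^{d₁}(1+x₂t)^{d₂}·(x_a(x_a s_a − 1)(1−t²) + t(1−x_a²)) dt for a = 1,2. Then there exist x₁, x₂ ∈ (0,1) with h₁(x₁,x₂) = 0 = h₂(x₁,x₂). -/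
open Real Set Filter Topology MeasureTheory

/-!
Write `p(t) = (1 + x₁ t)^d₁ (1 + x₂ t)^d₂`, `I = ∫ p (1 - t²)` and `J = ∫ p t` over `[-1, 1]`.
Then `h_a = (1 - x_a²) J - x_a (1 - s_a x_a) I`, so both `h_a` vanish once `J = r I` with each
`x_a ∈ (0, 1)` solving `x_a (1 - s_a x_a) = r (1 - x_a²)`. For `s_a < 1` this equation has a
continuous branch of solutions `x_a(r) ∈ [0, 1)` with `x_a(r) ~ r` as `r → 0⁺`, and it remains to
find a zero of `r ↦ J - r I` along it. Integrating by parts,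
`2 J = ∫ p' (1 - t²) ≥ (d₁ x₁ (1 - x₁) + d₂ x₂ (1 - x₂)) I ≈ (d₁ + d₂) r I`, which beats `2 r I`
for small `r` because `d₁ + d₂ ≥ 3`; for large `r`, `J` stays bounded while `I ≥ 2/3`. The
intermediate value theorem concludes.
-/

/-- For `s < 1` and `r ≥ 0`, the root in `[0, 1)` of `x (1 - s x) = r (1 - x²)`, given by the
rationalised quadratic formula, which stays valid at `r = s`. -/
noncomputable def quadRoot (s r : ℝ) : ℝ := 2 * r / (1 + √(1 + 4 * r * (r - s)))

section quadRoot

variable {s r : ℝ}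

lemma continuous_quadRoot (s : ℝ) : Continuous (quadRoot s) :=
  Continuous.div (by fun_prop) (by fun_prop) fun r ↦ by positivity

lemma quadRoot_nonneg (hr : 0 ≤ r) : 0 ≤ quadRoot s r := by
  unfold quadRoot; positivity

lemma quadRoot_pos (hr : 0 < r) : 0 < quadRoot s r := by
  unfold quadRoot; positivity

lemma quadRoot_lt_one (hs : s < 1) : quadRoot s r < 1 := by
  rw [quadRoot, div_lt_one (by positivity)]
  rcases lt_or_ge (2 * r - 1) 0 with h | h
  · linarith [sqrt_nonneg (1 + 4 * r * (r - s))]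
  · have : 2 * r - 1 < √(1 + 4 * r * (r - s)) := by
      rw [lt_sqrt h]; nlinarith
    linarith

lemma quadRoot_mem_Icc (hs : s < 1) (hr : 0 ≤ r) : quadRoot s r ∈ Icc (0:ℝ) 1 :=
  ⟨quadRoot_nonneg hr, (quadRoot_lt_one hs).le⟩

lemma quadRoot_mul_one_sub (hs : s < 1) (hr : 0 ≤ r) :
    quadRoot s r * (1 - s * quadRoot s r) = r * (1 - quadRoot s r ^ 2) := by
  have hD := sq_sqrt (by nlinarith [sq_nonneg (2 * r - 1)] : 0 ≤ 1 + 4 * r * (r - s))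
  unfold quadRoot
  set D := √(1 + 4 * r * (r - s))
  have : 1 + D ≠ 0 := by positivity
  field_simp
  linear_combination (-r) * hD

lemma eventually_lt_quadRoot_mul_one_sub {c : ℝ} (hc : c < 1) (s : ℝ) :
    ∀ᶠ r in 𝓝[>] 0, c * r < quadRoot s r * (1 - quadRoot s r) := by
  set q : ℝ → ℝ := fun r ↦ 2 / (1 + √(1 + 4 * r * (r - s)))
  have hq : Continuous q := Continuous.div (by fun_prop) (by fun_prop) fun r ↦ by positivity
  have hg : Continuous fun r ↦ q r * (1 - r * q r) := by fun_prop
  have hq0 : c < q 0 * (1 - 0 * q 0) := by norm_num [q, hc]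
  filter_upwards [nhdsWithin_le_nhds (continuousAt_const.eventually_lt hg.continuousAt hq0),
    self_mem_nhdsWithin] with r hr hpos
  have : quadRoot s r = r * q r := by simp only [quadRoot, q]; ring
  rw [this]
  nlinarith [mul_lt_mul_of_pos_left hr (mem_Ioi.mp hpos)]

end quadRoot

lemma integral_deriv_mul_one_sub_sq {f f' : ℝ → ℝ} (hf : ∀ t ∈ uIcc (-1:ℝ) 1, HasDerivAt f (f' t) t)
    (hf' : IntervalIntegrable f' volume (-1) 1) :
    ∫ t in (-1:ℝ)..1, f' t * (1 - t ^ 2) = 2 * ∫ t in (-1:ℝ)..1, f t * t := by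
  have hw : ∀ t ∈ uIcc (-1:ℝ) 1, HasDerivAt (fun t ↦ 1 - t ^ 2) (-(2 * t)) t := fun t _ ↦ by
    simpa using (hasDerivAt_pow 2 t).const_sub 1
  have := intervalIntegral.integral_mul_deriv_eq_deriv_mul hf hw hf'
    (Continuous.intervalIntegrable (by fun_prop) _ _)
  have hlhs : ∫ t in (-1:ℝ)..1, f t * -(2 * t) = -2 * ∫ t in (-1:ℝ)..1, f t * t := by
    rw [← intervalIntegral.integral_const_mul]; congr 1; ext t; ring
  rw [hlhs] at this
  norm_num at this
  linarith

def profile (d₁ d₂ : ℕ) (x₁ x₂ t : ℝ) : ℝ := (1 + x₁ * t) ^ d₁ * (1 + x₂ * t) ^ d₂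

noncomputable def mass (d₁ d₂ : ℕ) (x₁ x₂ : ℝ) : ℝ :=
  ∫ t in (-1:ℝ)..1, profile d₁ d₂ x₁ x₂ t * (1 - t ^ 2)

noncomputable def moment (d₁ d₂ : ℕ) (x₁ x₂ : ℝ) : ℝ :=
  ∫ t in (-1:ℝ)..1, profile d₁ d₂ x₁ x₂ t * t

section profile

variable {d₁ d₂ : ℕ} {x₁ x₂ t : ℝ}

@[fun_prop]
lemma continuous_profile (d₁ d₂ : ℕ) (x₁ x₂ : ℝ) : Continuous (profile d₁ d₂ x₁ x₂) := by
  unfold profile; fun_prop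

lemma one_add_mul_nonneg {x : ℝ} (hx : x ∈ Icc (0:ℝ) 1) (ht : t ∈ Icc (-1:ℝ) 1) :
    0 ≤ 1 + x * t := by
  nlinarith [hx.1, hx.2, ht.1, ht.2]

lemma profile_nonneg (hx₁ : x₁ ∈ Icc (0:ℝ) 1) (hx₂ : x₂ ∈ Icc (0:ℝ) 1)
    (ht : t ∈ Icc (-1:ℝ) 1) : 0 ≤ profile d₁ d₂ x₁ x₂ t := by
  have := one_add_mul_nonneg hx₁ ht
  have := one_add_mul_nonneg hx₂ ht
  unfold profile; positivity

lemma profile_le (hx₁ : x₁ ∈ Icc (0:ℝ) 1) (hx₂ : x₂ ∈ Icc (0:ℝ) 1)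
    (ht : t ∈ Icc (-1:ℝ) 1) : profile d₁ d₂ x₁ x₂ t ≤ 2 ^ (d₁ + d₂) := by
  rw [profile, pow_add]
  have := one_add_mul_nonneg hx₁ ht
  have := one_add_mul_nonneg hx₂ ht
  have h₁ : 1 + x₁ * t ≤ 2 := by nlinarith [hx₁.1, hx₁.2, ht.1, ht.2]
  have h₂ : 1 + x₂ * t ≤ 2 := by nlinarith [hx₂.1, hx₂.2, ht.1, ht.2]
  gcongr

lemma one_le_profile (hx₁ : 0 ≤ x₁) (hx₂ : 0 ≤ x₂) (ht : 0 ≤ t) : 1 ≤ profile d₁ d₂ x₁ x₂ t :=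
  one_le_mul_of_one_le_of_one_le (one_le_pow₀ (by nlinarith)) (one_le_pow₀ (by nlinarith))

lemma hasDerivAt_profile (d₁ d₂ : ℕ) (x₁ x₂ t : ℝ) :
    HasDerivAt (profile d₁ d₂ x₁ x₂)
      (d₁ * x₁ * (1 + x₁ * t) ^ (d₁ - 1) * (1 + x₂ * t) ^ d₂
        + d₂ * x₂ * (1 + x₁ * t) ^ d₁ * (1 + x₂ * t) ^ (d₂ - 1)) t := by
  have h₁ := (((hasDerivAt_id' t).const_mul x₁).const_add 1).fun_pow d₁
  have h₂ := (((hasDerivAt_id' t).const_mul x₂).const_add 1).fun_pow d₂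
  exact (h₁.fun_mul h₂).congr_deriv (by ring)

lemma mul_one_sub_mul_pow_le {x : ℝ} (d : ℕ) (hx : x ∈ Icc (0:ℝ) 1) (ht : t ∈ Icc (-1:ℝ) 1) :
    x * (1 - x) * (1 + x * t) ^ d ≤ x * (1 + x * t) ^ (d - 1) := by
  obtain ⟨hx₀, hx₁⟩ := hx
  cases d with
  | zero => simp; nlinarith
  | succ n =>
    have hmul : (1 - x) * (1 + x * t) ≤ 1 := by
      nlinarith [mul_nonneg (mul_nonneg (sub_nonneg.mpr hx₁) hx₀) (sub_nonneg.mpr ht.2)]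
    have := pow_nonneg (one_add_mul_nonneg ⟨hx₀, hx₁⟩ ht) n
    rw [pow_succ, Nat.add_sub_cancel]
    calc x * (1 - x) * ((1 + x * t) ^ n * (1 + x * t))
        = x * (1 + x * t) ^ n * ((1 - x) * (1 + x * t)) := by ring
      _ ≤ x * (1 + x * t) ^ n * 1 := by gcongr
      _ = x * (1 + x * t) ^ n := mul_one _

/-- Integration by parts turns `2 J` into `∫ p' (1 - t²)`, and `x / (1 + x t) ≥ x (1 - x)` on
`[-1, 1]` bounds the logarithmic derivative of `p` from below. -/
lemma mul_mass_le_two_mul_moment (hx₁ : x₁ ∈ Icc (0:ℝ) 1) (hx₂ : x₂ ∈ Icc (0:ℝ) 1) :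
    (d₁ * (x₁ * (1 - x₁)) + d₂ * (x₂ * (1 - x₂))) * mass d₁ d₂ x₁ x₂ ≤ 2 * moment d₁ d₂ x₁ x₂ := by
  rw [moment, ← integral_deriv_mul_one_sub_sq (fun t _ ↦ hasDerivAt_profile d₁ d₂ x₁ x₂ t)
    (Continuous.intervalIntegrable (by fun_prop) _ _), mass,
    ← intervalIntegral.integral_const_mul]
  refine intervalIntegral.integral_mono_on (by norm_num)
    (Continuous.intervalIntegrable (by fun_prop) _ _)
    (Continuous.intervalIntegrable (by fun_prop) _ _) fun t ht ↦ ?_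
  have hw : 0 ≤ 1 - t ^ 2 := by nlinarith [ht.1, ht.2]
  have h₁ := mul_le_mul_of_nonneg_right (mul_one_sub_mul_pow_le d₁ hx₁ ht)
    (pow_nonneg (one_add_mul_nonneg hx₂ ht) d₂)
  have h₂ := mul_le_mul_of_nonneg_right (mul_one_sub_mul_pow_le d₂ hx₂ ht)
    (pow_nonneg (one_add_mul_nonneg hx₁ ht) d₁)
  have hd₁ : (0:ℝ) ≤ d₁ := Nat.cast_nonneg d₁
  have hd₂ : (0:ℝ) ≤ d₂ := Nat.cast_nonneg d₂
  rw [profile]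
  nlinarith [mul_le_mul_of_nonneg_left h₁ hd₁, mul_le_mul_of_nonneg_left h₂ hd₂]

lemma two_div_three_le_mass (hx₁ : x₁ ∈ Icc (0:ℝ) 1) (hx₂ : x₂ ∈ Icc (0:ℝ) 1) :
    2 / 3 ≤ mass d₁ d₂ x₁ x₂ := by
  have hint (a b : ℝ) : IntervalIntegrable (fun t ↦ profile d₁ d₂ x₁ x₂ t * (1 - t ^ 2))
      volume a b := Continuous.intervalIntegrable (by fun_prop) _ _
  have hneg : 0 ≤ ∫ t in (-1:ℝ)..0, profile d₁ d₂ x₁ x₂ t * (1 - t ^ 2) :=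
    intervalIntegral.integral_nonneg (by norm_num) fun t ht ↦ mul_nonneg
      (profile_nonneg hx₁ hx₂ ⟨ht.1, by linarith [ht.2]⟩) (by nlinarith [ht.1, ht.2])
  have hpos : ∫ t in (0:ℝ)..1, (1 - t ^ 2) ≤ ∫ t in (0:ℝ)..1, profile d₁ d₂ x₁ x₂ t * (1 - t ^ 2) :=
    intervalIntegral.integral_mono_on (by norm_num)
      (Continuous.intervalIntegrable (by fun_prop) _ _) (hint 0 1) fun t ht ↦
        le_mul_of_one_le_left (by nlinarith [ht.1, ht.2]) (one_le_profile hx₁.1 hx₂.1 ht.1)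
  have hval : ∫ t in (0:ℝ)..1, (1 - t ^ 2) = 2 / 3 := by
    rw [intervalIntegral.integral_sub intervalIntegrable_const
      (Continuous.intervalIntegrable (by fun_prop) _ _)]
    norm_num [integral_pow]
  rw [mass, ← intervalIntegral.integral_add_adjacent_intervals (hint (-1) 0) (hint 0 1)]
  linarith

lemma moment_le (hx₁ : x₁ ∈ Icc (0:ℝ) 1) (hx₂ : x₂ ∈ Icc (0:ℝ) 1) :
    moment d₁ d₂ x₁ x₂ ≤ 2 ^ (d₁ + d₂ + 1) := by
  have := intervalIntegral.integral_mono_on (μ := volume) (by norm_num : (-1:ℝ) ≤ 1)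
    (Continuous.intervalIntegrable (by fun_prop) _ _)
    intervalIntegrable_const fun t ht ↦
      (mul_le_of_le_one_right (profile_nonneg hx₁ hx₂ ht) ht.2).trans
        (profile_le (d₁ := d₁) (d₂ := d₂) hx₁ hx₂ ht)
  rw [moment]
  norm_num at this
  linarith [pow_succ (2:ℝ) (d₁ + d₂)]

lemma integral_profile_mul_add (d₁ d₂ : ℕ) (x₁ x₂ c e : ℝ) :
    ∫ t in (-1:ℝ)..1, profile d₁ d₂ x₁ x₂ t * (c * (1 - t ^ 2) + t * e) =
      c * mass d₁ d₂ x₁ x₂ + e * moment d₁ d₂ x₁ x₂ := by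
  rw [mass, moment, ← intervalIntegral.integral_const_mul, ← intervalIntegral.integral_const_mul,
    ← intervalIntegral.integral_add (Continuous.intervalIntegrable (by fun_prop) _ _)
      (Continuous.intervalIntegrable (by fun_prop) _ _)]
  congr 1; ext t; ring

lemma integral_profile_eq_zero {x s r : ℝ} (hx : x * (1 - s * x) = r * (1 - x ^ 2))
    (hr : moment d₁ d₂ x₁ x₂ = r * mass d₁ d₂ x₁ x₂) :
    ∫ t in (-1:ℝ)..1,
      profile d₁ d₂ x₁ x₂ t * (x * (x * s - 1) * (1 - t ^ 2) + t * (1 - x ^ 2)) = 0 := by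
  rw [integral_profile_mul_add, hr]
  linear_combination (-mass d₁ d₂ x₁ x₂) * hx

lemma continuous_mass (d₁ d₂ : ℕ) : Continuous fun x : ℝ × ℝ ↦ mass d₁ d₂ x.1 x.2 := by
  unfold mass profile; fun_prop

lemma continuous_moment (d₁ d₂ : ℕ) : Continuous fun x : ℝ × ℝ ↦ moment d₁ d₂ x.1 x.2 := by
  unfold moment profile; fun_prop

end profile

noncomputable def momentGap (d₁ d₂ : ℕ) (s₁ s₂ r : ℝ) : ℝ :=
  moment d₁ d₂ (quadRoot s₁ r) (quadRoot s₂ r) - r * mass d₁ d₂ (quadRoot s₁ r) (quadRoot s₂ r)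

lemma continuous_momentGap (d₁ d₂ : ℕ) (s₁ s₂ : ℝ) : Continuous (momentGap d₁ d₂ s₁ s₂) := by
  have hx : Continuous fun r ↦ (quadRoot s₁ r, quadRoot s₂ r) :=
    (continuous_quadRoot s₁).prodMk (continuous_quadRoot s₂)
  exact ((continuous_moment d₁ d₂).comp hx).sub
    (continuous_id.mul ((continuous_mass d₁ d₂).comp hx))

section momentGap

variable {d₁ d₂ : ℕ} {s₁ s₂ : ℝ}

lemma eventually_momentGap_pos (hd : 3 ≤ d₁ + d₂) (hs₁ : s₁ < 1) (hs₂ : s₂ < 1) :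
    ∀ᶠ r in 𝓝[>] 0, 0 < momentGap d₁ d₂ s₁ s₂ r := by
  filter_upwards [eventually_lt_quadRoot_mul_one_sub (c := 5 / 6) (by norm_num) s₁,
    eventually_lt_quadRoot_mul_one_sub (c := 5 / 6) (by norm_num) s₂, self_mem_nhdsWithin]
    with r h₁ h₂ (hr : 0 < r)
  set x₁ := quadRoot s₁ r
  set x₂ := quadRoot s₂ r
  have hx₁ := quadRoot_mem_Icc hs₁ hr.le
  have hx₂ := quadRoot_mem_Icc hs₂ hr.le
  have hmass := two_div_three_le_mass (d₁ := d₁) (d₂ := d₂) hx₁ hx₂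
  have hd' : (3:ℝ) ≤ d₁ + d₂ := by exact_mod_cast hd
  have hsum : 5 / 2 * r ≤ d₁ * (x₁ * (1 - x₁)) + d₂ * (x₂ * (1 - x₂)) := by
    nlinarith [mul_le_mul_of_nonneg_left h₁.le (Nat.cast_nonneg (α := ℝ) d₁),
      mul_le_mul_of_nonneg_left h₂.le (Nat.cast_nonneg (α := ℝ) d₂)]
  have := (mul_le_mul_of_nonneg_right hsum (by linarith : 0 ≤ mass d₁ d₂ x₁ x₂)).trans
    (mul_mass_le_two_mul_moment hx₁ hx₂)
  rw [momentGap]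
  nlinarith

lemma eventually_momentGap_neg (hs₁ : s₁ < 1) (hs₂ : s₂ < 1) :
    ∀ᶠ r in atTop, momentGap d₁ d₂ s₁ s₂ r < 0 := by
  filter_upwards [eventually_gt_atTop (3 * 2 ^ (d₁ + d₂))] with r hr
  have h2 : (0:ℝ) < 2 ^ (d₁ + d₂) := by positivity
  have hx₁ := quadRoot_mem_Icc hs₁ (by linarith : 0 ≤ r)
  have hx₂ := quadRoot_mem_Icc hs₂ (by linarith : 0 ≤ r)
  have := two_div_three_le_mass (d₁ := d₁) (d₂ := d₂) hx₁ hx₂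
  have := moment_le (d₁ := d₁) (d₂ := d₂) hx₁ hx₂
  rw [momentGap, pow_succ] at *
  nlinarith

end momentGap

theorem stmt19 (d₁ d₂ : ℕ) (hd₁ : 1 ≤ d₁) (hd₂ : 1 ≤ d₂) (hnot : ¬(d₁ = 1 ∧ d₂ = 1))
    (s₁ s₂ : ℝ) (hs₁ : s₁ < 1) (hs₂ : s₂ < 1) :
    ∃ x₁ ∈ Set.Ioo (0:ℝ) 1, ∃ x₂ ∈ Set.Ioo (0:ℝ) 1,
      (∫ t in (-1:ℝ)..1, (1+x₁*t)^d₁ * (1+x₂*t)^d₂ *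
        (x₁*(x₁*s₁-1)*(1-t^2) + t*(1-x₁^2))) = 0 ∧
      (∫ t in (-1:ℝ)..1, (1+x₁*t)^d₁ * (1+x₂*t)^d₂ *
        (x₂*(x₂*s₂-1)*(1-t^2) + t*(1-x₂^2))) = 0 := by
  have hd : 3 ≤ d₁ + d₂ := by omega
  obtain ⟨r₀, hr₀, hr₀pos⟩ :=
    ((eventually_momentGap_pos hd hs₁ hs₂).and self_mem_nhdsWithin).exists
  obtain ⟨R, hR, hr₀R⟩ := ((eventually_momentGap_neg hs₁ hs₂).and (eventually_ge_atTop r₀)).exists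
  obtain ⟨r, hr, hgap⟩ := intermediate_value_Icc' hr₀R
    (continuous_momentGap d₁ d₂ s₁ s₂).continuousOn ⟨hR.le, hr₀.le⟩
  have hrpos : 0 < r := lt_of_lt_of_le hr₀pos hr.1
  have hbalance := sub_eq_zero.mp hgap
  exact ⟨quadRoot s₁ r, ⟨quadRoot_pos hrpos, quadRoot_lt_one hs₁⟩,
    quadRoot s₂ r, ⟨quadRoot_pos hrpos, quadRoot_lt_one hs₂⟩,
    integral_profile_eq_zero (quadRoot_mul_one_sub hs₁ hrpos.le) hbalance,
    integral_profile_eq_zero (quadRoot_mul_one_sub hs₂ hrpos.le) hbalance⟩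
end
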